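/- For every k ∈ [n] and every signaling scheme Z, the consumer surplus accumulated on the k smallest values satisfies Σ_{i=1}^k f_𝒟(vᵢ)·cs_{vᵢ}(Z) ≤ V_k − max_{i∈[k]} ( vᵢ · Σ_{j=i}^k f_𝒟(vⱼ) ), where V_k = Σ_{i=1}^k vᵢ·f_𝒟(vᵢ). -/

import Mathlib

/-! For a single signal `S` with price `p`, the surplus collected on the values up to `v k` is
`∑_{i ≤ k} v i S i - ∑_{i ≤ k} S i min (v i) p`, and for every `i ≤ k` the subtracted sum is at
least `v i * S[i, k]`: directly when `v i ≤ p`, and when `p < v i` because optimality of `p` gives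
`p * S[p, k] ≥ v i * S[i, k] + (v i - p) * S(k, ∞)`. Averaging over the signals of a scheme with
Bayes plausibility turns both sides into the corresponding quantities for the prior. -/

open Finset MeasureTheory

namespace PD

noncomputable section

/-- Complementary CDF of a mass function `fS` at value `v i`. -/
def G {n : ℕ} (v fS : Fin n → ℝ) (i : Fin n) : ℝ :=
  ∑ j ∈ Finset.univ.filter (fun j => v i ≤ v j), fS j

/-- A signal is a probability mass function on the values. -/
def IsSignal {n : ℕ} (fS : Fin n → ℝ) : Prop :=
  (∀ i, 0 ≤ fS i) ∧ ∑ i, fS i = 1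

/-- The index of the seller's price: the smallest index maximizing `v i * G i`. -/
def priceIdx {n : ℕ} [NeZero n] (v fS : Fin n → ℝ) : Fin n :=
  (Finset.univ.filter (fun i => ∀ j, v j * G v fS j ≤ v i * G v fS i)).min' (by
    haveI : Nonempty (Fin n) := ⟨⟨0, Nat.pos_of_ne_zero (NeZero.ne n)⟩⟩
    obtain ⟨b, _, hb⟩ := Finset.exists_max_image (Finset.univ : Finset (Fin n))
      (fun i => v i * G v fS i) Finset.univ_nonempty
    exact ⟨b, Finset.mem_filter.mpr ⟨Finset.mem_univ _, fun j => hb j (Finset.mem_univ _)⟩⟩)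

/-- Consumer surplus of value `v i` under signal `fS`. -/
def cs {n : ℕ} [NeZero n] (v fS : Fin n → ℝ) (i : Fin n) : ℝ :=
  if v (priceIdx v fS) ≤ v i then v i - v (priceIdx v fS) else 0

/-- Revenue of a signal: the maximum of `v i * G i`. -/
def revSig {n : ℕ} [NeZero n] (v fS : Fin n → ℝ) : ℝ :=
  Finset.univ.sup' (by
    haveI : Nonempty (Fin n) := ⟨⟨0, Nat.pos_of_ne_zero (NeZero.ne n)⟩⟩
    exact Finset.univ_nonempty) (fun i => v i * G v fS i)

/-- A signaling scheme for prior mass function `f`. -/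
structure Scheme (n : ℕ) (f : Fin n → ℝ) where
  Q : ℕ
  sig : Fin Q → Fin n → ℝ
  wt : Fin Q → ℝ
  sig_isSignal : ∀ q, IsSignal (sig q)
  wt_nonneg : ∀ q, 0 ≤ wt q
  wt_sum : ∑ q, wt q = 1
  bayes : ∀ i, ∑ q, wt q * sig q i = f i

/-- Expected consumer surplus of value `v i` under scheme `Z`. -/
def csZ {n : ℕ} [NeZero n] (v f : Fin n → ℝ) (Z : Scheme n f) (i : Fin n) : ℝ :=
  ∑ q, cs v (Z.sig q) i * (Z.wt q * Z.sig q i / f i)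

/-- Expected revenue of a scheme. -/
def revZ {n : ℕ} [NeZero n] (v : Fin n → ℝ) {f : Fin n → ℝ} (Z : Scheme n f) : ℝ :=
  ∑ q, Z.wt q * revSig v (Z.sig q)

/-- A scheme is efficient if on every positive-weight signal, the smallest value
in the support maximizes `v * G`. -/
def Efficient {n : ℕ} (v : Fin n → ℝ) {f : Fin n → ℝ} (Z : Scheme n f) : Prop :=
  ∀ q, 0 < Z.wt q → ∀ i, (0 < Z.sig q i ∧ ∀ j, 0 < Z.sig q j → i ≤ j) →
    ∀ j, v j * G v (Z.sig q) j ≤ v i * G v (Z.sig q) i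

/-- A scheme is monotone if higher values get (weakly) higher expected surplus. -/
def MonotoneScheme {n : ℕ} [NeZero n] (v f : Fin n → ℝ) (Z : Scheme n f) : Prop :=
  ∀ i j : Fin n, v i < v j → csZ v f Z i ≤ csZ v f Z j

/-- A scheme is buyer-optimal if the total expected consumer surplus equals the
expected value minus the Myerson revenue. -/
def BuyerOptimal {n : ℕ} [NeZero n] (v f : Fin n → ℝ) (Z : Scheme n f) : Prop :=
  ∑ i, f i * csZ v f Z i = (∑ i, f i * v i) - revSig v f

/-- The surplus-mass step function of a scheme: equal to `csZ i` on the quantile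
interval `(F(v_{i-1}), F(v_i)]`. -/
def smf {n : ℕ} [NeZero n] (v f : Fin n → ℝ) (Z : Scheme n f) (x : ℝ) : ℝ :=
  ∑ i, if (∑ j ∈ Finset.univ.filter (fun j => j < i), f j) < x ∧
          x ≤ ∑ j ∈ Finset.univ.filter (fun j => j ≤ i), f j
       then csZ v f Z i else 0

/-- Sorted `m`-prefix sum of `g` on `(0,1]`: the infimum of `∫_T g` over
(measurable) subsets `T` of `(0,1]` of total length `m`. -/
def PF (g : ℝ → ℝ) (m : ℝ) : ℝ :=
  sInf { r : ℝ | ∃ T : Set ℝ, T ⊆ Set.Ioc 0 1 ∧ MeasurableSet T ∧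
    volume T = ENNReal.ofReal m ∧ r = ∫ x in T, g x }

/-- Integration `m`-prefix sum of `g`: `∫₀^m g`. -/
def PFV (g : ℝ → ℝ) (m : ℝ) : ℝ := ∫ x in Set.Ioc (0:ℝ) m, g x

/-- A singleton signal puts all mass on one value. -/
def IsSingleton {n : ℕ} (fS : Fin n → ℝ) : Prop :=
  ∃ i : Fin n, fS = fun j => if j = i then 1 else 0

/-- An equal-revenue binary signal on `v i < v j` puts mass `1 - v i / v j` on
`v i` and `v i / v j` on `v j`. -/
def IsEqRevBinary {n : ℕ} (v : Fin n → ℝ) (fS : Fin n → ℝ) : Prop :=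
  ∃ i j : Fin n, v i < v j ∧
    fS = fun l => if l = i then 1 - v i / v j else if l = j then v i / v j else 0

/-- `i` is the smallest value in the support of `fS`. -/
def MinSupp {n : ℕ} (fS : Fin n → ℝ) (i : Fin n) : Prop :=
  0 < fS i ∧ ∀ j, 0 < fS j → i ≤ j

end

section Intervals

variable {α M : Type*} [LinearOrder α] [LocallyFiniteOrder α] [LocallyFiniteOrderTop α]
  [AddCommMonoid M]

lemma sum_Ici_eq_sum_Icc_add_sum_Ioi (g : α → M) {i k : α} (hik : i ≤ k) :
    ∑ j ∈ Ici i, g j = ∑ j ∈ Icc i k, g j + ∑ j ∈ Ioi k, g j := by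
  rw [← sum_union (disjoint_left.2 fun j hj hj' => (mem_Ioi.1 hj').not_ge (mem_Icc.1 hj).2)]
  congr 1
  ext j
  simp only [mem_Ici, mem_union, mem_Icc, mem_Ioi]
  constructor
  · intro hj
    exact (le_or_gt j k).imp (⟨hj, ·⟩) id
  · rintro (hj | hj)
    exacts [hj.1, hik.trans hj.le]

end Intervals

variable {n : ℕ} {v : Fin n → ℝ}

lemma G_eq_sum_Ici (hv : StrictMono v) (fS : Fin n → ℝ) (i : Fin n) :
    G v fS i = ∑ j ∈ Ici i, fS j := by
  simp only [G, hv.le_iff_le, filter_le_eq_Ici]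

lemma mul_G_le_mul_G_priceIdx [NeZero n] (v fS : Fin n → ℝ) (j : Fin n) :
    v j * G v fS j ≤ v (priceIdx v fS) * G v fS (priceIdx v fS) := by
  unfold priceIdx
  exact (mem_filter.1
    (min'_mem (univ.filter fun i => ∀ j, v j * G v fS j ≤ v i * G v fS i) _)).2 j

lemma mul_cs_eq [NeZero n] (v fS : Fin n → ℝ) (i : Fin n) :
    fS i * cs v fS i = v i * fS i - fS i * min (v i) (v (priceIdx v fS)) := by
  unfold cs
  split_ifs with h
  · rw [min_eq_right h]; ring
  · rw [min_eq_left (not_le.1 h).le]; ring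

lemma mul_sum_Icc_le_sum_mul_min (hv : Monotone v) (hvpos : ∀ i, 0 < v i) {fS : Fin n → ℝ}
    (hS : ∀ i, 0 ≤ fS i) {p : ℝ} (hp : 0 < p) (j k : Fin n) :
    min (v j) p * ∑ i ∈ Icc j k, fS i ≤ ∑ i ∈ Iic k, fS i * min (v i) p :=
  calc min (v j) p * ∑ i ∈ Icc j k, fS i = ∑ i ∈ Icc j k, fS i * min (v j) p := by
        rw [mul_sum]; simp_rw [mul_comm]
    _ ≤ ∑ i ∈ Icc j k, fS i * min (v i) p :=
        sum_le_sum fun i hi => mul_le_mul_of_nonneg_left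
          (min_le_min_right p (hv (mem_Icc.1 hi).1)) (hS i)
    _ ≤ ∑ i ∈ Iic k, fS i * min (v i) p :=
        sum_le_sum_of_subset_of_nonneg Icc_subset_Iic_self fun i _ _ =>
          mul_nonneg (hS i) (le_min (hvpos i).le hp.le)

lemma mul_sum_Icc_le_of_mul_G_le (hv : StrictMono v) {fS : Fin n → ℝ} (hS : ∀ i, 0 ≤ fS i)
    {p i k : Fin n} (hpi : p ≤ i) (hik : i ≤ k)
    (hrev : v i * G v fS i ≤ v p * G v fS p) :
    v i * ∑ j ∈ Icc i k, fS j ≤ v p * ∑ j ∈ Icc p k, fS j := by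
  have hT : 0 ≤ ∑ j ∈ Ioi k, fS j := sum_nonneg fun j _ => hS j
  rw [G_eq_sum_Ici hv, G_eq_sum_Ici hv, sum_Ici_eq_sum_Icc_add_sum_Ioi _ hik,
    sum_Ici_eq_sum_Icc_add_sum_Ioi _ (hpi.trans hik)] at hrev
  nlinarith [mul_nonneg (sub_nonneg.2 (hv.monotone hpi)) hT]

lemma sum_Iic_mul_cs_le [NeZero n] (hv : StrictMono v) (hvpos : ∀ i, 0 < v i)
    {fS : Fin n → ℝ} (hS : ∀ i, 0 ≤ fS i) {i k : Fin n} (hik : i ≤ k) :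
    ∑ j ∈ Iic k, fS j * cs v fS j ≤ ∑ j ∈ Iic k, v j * fS j - v i * ∑ j ∈ Icc i k, fS j := by
  suffices v i * ∑ j ∈ Icc i k, fS j ≤ ∑ j ∈ Iic k, fS j * min (v j) (v (priceIdx v fS)) by
    rw [sum_congr rfl fun j _ => mul_cs_eq v fS j, sum_sub_distrib]
    linarith
  set P := priceIdx v fS
  rcases le_or_gt (v i) (v P) with hiP | hPi
  · simpa only [min_eq_left hiP] using
      mul_sum_Icc_le_sum_mul_min hv.monotone hvpos hS (hvpos P) i k
  · calc v i * ∑ j ∈ Icc i k, fS j ≤ v P * ∑ j ∈ Icc P k, fS j :=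
          mul_sum_Icc_le_of_mul_G_le hv hS (hv.lt_iff_lt.1 hPi).le hik
            (mul_G_le_mul_G_priceIdx v fS i)
      _ = min (v P) (v P) * ∑ j ∈ Icc P k, fS j := by rw [min_self]
      _ ≤ _ := mul_sum_Icc_le_sum_mul_min hv.monotone hvpos hS (hvpos P) P k

lemma mul_csZ_eq [NeZero n] (v : Fin n → ℝ) {f : Fin n → ℝ} (Z : Scheme n f) (i : Fin n) :
    f i * csZ v f Z i = ∑ q, Z.wt q * (Z.sig q i * cs v (Z.sig q) i) := by
  rcases eq_or_ne (f i) 0 with hfi | hfi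
  -- `csZ` divides by `f i = 0` here, but Bayes plausibility makes every `wt q * sig q i` vanish.
  · have h0 : ∀ q, Z.wt q * Z.sig q i = 0 := by
      have hb := Z.bayes i
      rw [hfi] at hb
      exact fun q => (sum_eq_zero_iff_of_nonneg fun q _ =>
        mul_nonneg (Z.wt_nonneg q) ((Z.sig_isSignal q).1 i)).1 hb q (mem_univ q)
    simp [hfi, ← mul_assoc, h0]
  · rw [csZ, mul_sum]
    refine sum_congr rfl fun q _ => ?_
    field_simp

lemma sum_wt_mul_sum_sig {f : Fin n → ℝ} (Z : Scheme n f) (s : Finset (Fin n))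
    (g : Fin n → ℝ) :
    ∑ q, Z.wt q * ∑ i ∈ s, g i * Z.sig q i = ∑ i ∈ s, g i * f i := by
  simp_rw [mul_sum, ← Z.bayes, mul_sum]
  rw [sum_comm]
  exact sum_congr rfl fun i _ => sum_congr rfl fun q _ => by ring

theorem stmt8 (n : ℕ) [NeZero n] (v f : Fin n → ℝ)
    (hv : StrictMono v) (hvpos : ∀ i, 0 < v i)
    (k : Fin n) (Z : Scheme n f) :
    ∑ i ∈ Finset.univ.filter (fun i => i ≤ k), f i * csZ v f Z i ≤
      (∑ i ∈ Finset.univ.filter (fun i => i ≤ k), v i * f i) -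
        (Finset.univ.filter (fun i => i ≤ k)).sup'
          ⟨k, by simp⟩
          (fun i => v i * ∑ j ∈ Finset.univ.filter (fun j => i ≤ j ∧ j ≤ k), f j) := by
  obtain ⟨i, hik, hi⟩ := exists_mem_eq_sup' (s := univ.filter (· ≤ k)) ⟨k, by simp⟩
    (fun i => v i * ∑ j ∈ univ.filter (fun j => i ≤ j ∧ j ≤ k), f j)
  rw [hi]
  simp only [filter_ge_eq_Iic, filter_le_le_eq_Icc, mem_Iic] at hik ⊢
  calc ∑ j ∈ Iic k, f j * csZ v f Z j
      = ∑ q, Z.wt q * ∑ j ∈ Iic k, Z.sig q j * cs v (Z.sig q) j := by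
        simp_rw [mul_csZ_eq, mul_sum]
        exact sum_comm
    _ ≤ ∑ q, Z.wt q * (∑ j ∈ Iic k, v j * Z.sig q j - v i * ∑ j ∈ Icc i k, Z.sig q j) :=
        sum_le_sum fun q _ => mul_le_mul_of_nonneg_left
          (sum_Iic_mul_cs_le hv hvpos (Z.sig_isSignal q).1 hik) (Z.wt_nonneg q)
    _ = ∑ j ∈ Iic k, v j * f j - v i * ∑ j ∈ Icc i k, f j := by
        have hIcc := sum_wt_mul_sum_sig Z (Icc i k) fun _ => v i
        simp only [← mul_sum] at hIcc
        simp_rw [mul_sub, sum_sub_distrib, sum_wt_mul_sum_sig, hIcc]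

end PD
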